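/- The Temperley–Lieb algebra 𝒯_n is generated as a unital K-algebra by the diagrams 𝒰_1, 𝒰_2, …, 𝒰_{n−1}; in particular every diagram in D(n,n) can be expressed as a word in 1, 𝒰_1, …, 𝒰_{n−1}. -/

import Mathlib

namespace TLBlob

/-- The boundary nodes of an `(n,m)` Temperley–Lieb diagram: `Sum.inl i` is the
`i`-th northern node (0-based), `Sum.inr j` the `j`-th southern node (0-based). -/
abbrev TLNode (n m : ℕ) := Sum (Fin n) (Fin m)

/-- Position of a node in the linear order obtained by reading the northern nodes
left to right and then the southern nodes right to left (so that noncrossing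
matchings in the rectangle correspond to noncrossing chords). -/
def nodePos {n m : ℕ} : TLNode n m → ℕ
  | Sum.inl i => (i : ℕ)
  | Sum.inr j => n + m - 1 - (j : ℕ)

/-- An `(n,m)` Temperley–Lieb diagram: a noncrossing perfect matching (fixed-point
free involution) of the `n` northern and `m` southern nodes. -/
structure TLDiagram (n m : ℕ) where
  pair : TLNode n m → TLNode n m
  involutive : Function.Involutive pair
  fixedFree : ∀ v, pair v ≠ v
  noncrossing : ∀ v w, nodePos v < nodePos w → nodePos w < nodePos (pair v) →
    nodePos (pair v) < nodePos (pair w) → False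

/-- `[2] = q + q⁻¹` where `q = x²`. -/
def twoQ {K : Type*} [CommRing K] (x : Kˣ) : K := (x : K) ^ 2 + ((x⁻¹ : Kˣ) : K) ^ 2

/-- The factor `x^{sign(a-b)}(1-δ_{ab})` associated to a cup/cap line, where the
letters `1,2` of the paper are encoded as `0,1 : Fin 2`. -/
def xfac {K : Type*} [CommRing K] (x : Kˣ) (a b : Fin 2) : K :=
  if a = b then 0 else if b < a then (x : K) else ((x⁻¹ : Kˣ) : K)

/-- The matrix `R_q(D)` associated to an `(n,m)` diagram `D`, with rows indexed by
words `v ∈ {1,2}ⁿ` (as functions `Fin n → Fin 2`) and columns by `w ∈ {1,2}ᵐ`. -/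
def Rmat {K : Type*} [CommRing K] (x : Kˣ) {n m : ℕ} (D : TLDiagram n m) :
    Matrix (Fin n → Fin 2) (Fin m → Fin 2) K := fun v w =>
  (∏ p ∈ Finset.univ.filter
      (fun p : Fin n × Fin n => p.1 < p.2 ∧ D.pair (Sum.inl p.1) = Sum.inl p.2),
    xfac x (v p.1) (v p.2)) *
  (∏ p ∈ Finset.univ.filter
      (fun p : Fin n × Fin m => D.pair (Sum.inl p.1) = Sum.inr p.2),
    (if v p.1 = w p.2 then (1 : K) else 0)) *
  (∏ p ∈ Finset.univ.filter
      (fun p : Fin m × Fin m => p.1 < p.2 ∧ D.pair (Sum.inr p.1) = Sum.inr p.2),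
    xfac x (w p.1) (w p.2))

/-- Two matrices are mask equivalent if they have zero entries in the same places. -/
def MaskEquiv {K : Type*} [CommRing K] {α β : Type*} (M N : Matrix α β K) : Prop :=
  ∀ i j, M i j = 0 ↔ N i j = 0

/-- Nodes of the concatenation `D|D'` of an `(n,m)` and an `(m,l)` diagram:
northern, middle, and southern nodes. -/
abbrev TriNode (n m l : ℕ) := Sum (Fin n) (Sum (Fin m) (Fin l))

def inUp {n m l : ℕ} : TLNode n m → TriNode n m l
  | Sum.inl i => Sum.inl i
  | Sum.inr j => Sum.inr (Sum.inl j)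

def inDown {n m l : ℕ} : TLNode m l → TriNode n m l
  | Sum.inl j => Sum.inr (Sum.inl j)
  | Sum.inr k => Sum.inr (Sum.inr k)

def inOut {n m l : ℕ} : TLNode n l → TriNode n m l
  | Sum.inl i => Sum.inl i
  | Sum.inr k => Sum.inr (Sum.inr k)

/-- Two nodes of the concatenation `D|D'` are linked if they are joined by a line
of `D` or of `D'`. -/
def Linked {n m l : ℕ} (D : TLDiagram n m) (D' : TLDiagram m l) :
    TriNode n m l → TriNode n m l → Prop := fun u v =>
  (∃ a, inUp a = u ∧ inUp (D.pair a) = v) ∨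
  (∃ a, inDown a = u ∧ inDown (D'.pair a) = v)

/-- Connectivity in the concatenation `D|D'`. -/
def Joined {n m l : ℕ} (D : TLDiagram n m) (D' : TLDiagram m l) :
    TriNode n m l → TriNode n m l → Prop :=
  Relation.ReflTransGen (Linked D D')

/-- `E` is the composite diagram `D ∘ D'`: outer nodes are paired in `E` exactly
when they are joined through the concatenation `D|D'`. -/
def IsComposite {n m l : ℕ} (D : TLDiagram n m) (D' : TLDiagram m l)
    (E : TLDiagram n l) : Prop :=
  ∀ u v : TLNode n l, E.pair u = v ↔ (u ≠ v ∧ Joined D D' (inOut u) (inOut v))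

/-- Middle nodes of the concatenation. -/
def IsMiddle {n m l : ℕ} : TriNode n m l → Prop
  | Sum.inr (Sum.inl _) => True
  | _ => False

/-- `ζ(D,D')`: the number of closed loops discarded when forming `D ∘ D'`, i.e. the
number of connected components of the concatenation graph consisting entirely of
middle nodes. -/
noncomputable def zeta {n m l : ℕ} (D : TLDiagram n m) (D' : TLDiagram m l) : ℕ :=
  Nat.card {c : Quot (Linked D D') // ∀ v, Quot.mk (Linked D D') v = c → IsMiddle v}

/-- The identity diagram `1 ∈ D(n,n)`. -/
def IsId {n : ℕ} (E : TLDiagram n n) : Prop :=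
  ∀ i : Fin n, E.pair (Sum.inl i) = Sum.inr i

/-- The diagram `𝒰_i ∈ D(n,n)` (with `1 ≤ i ≤ n-1`, nodes numbered `1,…,n`):
it pairs nodes `(i,i+1)` on the top, `(i',(i+1)')` on the bottom, and `(k,k')`
otherwise.  In the 0-based encoding these are positions `i-1` and `i`. -/
def IsU {n : ℕ} (i : ℕ) (E : TLDiagram n n) : Prop :=
  ∃ (_ : 1 ≤ i) (h2 : i < n),
    E.pair (Sum.inl ⟨i - 1, by omega⟩) = Sum.inl ⟨i, h2⟩ ∧
    E.pair (Sum.inr ⟨i - 1, by omega⟩) = Sum.inr ⟨i, h2⟩ ∧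
    ∀ k : Fin n, (k : ℕ) ≠ i - 1 → (k : ℕ) ≠ i → E.pair (Sum.inl k) = Sum.inr k

/-- The column reached after the first `k` steps of a walk encoded as a word in
`{1,2}ⁿ` (letter `1` = `0 : Fin 2` is a step increasing the column index,
letter `2` = `1 : Fin 2` a step decreasing it). -/
def col {n : ℕ} (a : Fin n → Fin 2) (k : ℕ) : ℤ :=
  ∑ j ∈ Finset.univ.filter (fun j : Fin n => (j : ℕ) < k),
    (if a j = 0 then (1 : ℤ) else -1)

/-- A word encodes a walk on the 1-Pascal graph (column indices stay nonnegative). -/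
def IsWalk {n : ℕ} (a : Fin n → Fin 2) : Prop := ∀ k, 0 ≤ col a k

/-- A pair of walks with a common endpoint, i.e. an element of `W²(n)`. -/
def WalkPair {n : ℕ} (a b : Fin n → Fin 2) : Prop :=
  IsWalk a ∧ IsWalk b ∧ col a n = col b n

/-- Vertex `(l,d)` (level `l`, column `d`) lies in the envelope of the pair `(a,b)`:
between the drawing of `b` reflected in the main vertical and the drawing of `a`,
and not strictly inside the triangle cut off by the piecewise straight line from
`(n,i)` to `(n-i,0)` to `(n,-i)`, where `i = col a n`. -/
def vertOK {n : ℕ} (a b : Fin n → Fin 2) (l : ℕ) (d : ℤ) : Prop :=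
  -(col b l) ≤ d ∧ d ≤ col a l ∧
  ((l : ℤ) - ((n : ℤ) - col a n) ≤ d ∨ d ≤ -((l : ℤ) - ((n : ℤ) - col a n)))

/-- The unit diamond tile with top vertex at level `r`, column `c` (so with
vertices `(r,c)`, `(r+1,c∓1)`, `(r+2,c)`) belongs to the tiling of the envelope
of `(a,b)`. -/
def IsTile {n : ℕ} (a b : Fin n → Fin 2) (r : ℕ) (c : ℤ) : Prop :=
  r + 2 ≤ n ∧ (c - (r : ℤ)) % 2 = 0 ∧ vertOK a b r c ∧
  vertOK a b (r + 1) (c - 1) ∧ vertOK a b (r + 1) (c + 1) ∧ vertOK a b (r + 2) c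

instance {n : ℕ} (a b : Fin n → Fin 2) (r : ℕ) (c : ℤ) : Decidable (IsTile a b r c) := by
  unfold IsTile vertOK; infer_instance

/-- The word `w((a,b))`, as the list of its (1-based) indices: scanning the tiles
of the envelope of `(a,b)` column by column (starting from the side of `a`), top
to bottom within a column, and writing `U_{r+1}` for a tile with top vertex at
level `r` (hence base at row `r+2`). -/
def wordOf {n : ℕ} (a b : Fin n → Fin 2) : List ℕ :=
  (List.range (2 * n + 1)).flatMap fun j =>
    (List.range (n - 1)).filterMap fun r =>
      if IsTile a b r ((n : ℤ) - (j : ℤ)) then some (r + 1) else none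

/-- Extend a word `v ∈ {1,2}ⁿ` by `0` beyond its length (convenience lookup). -/
def ext {n : ℕ} (v : Fin n → Fin 2) (k : ℕ) : Fin 2 :=
  if h : k < n then v ⟨k, h⟩ else 0

/-- The matrix `R(U_i) = R_q(𝒰_i)` acting on `(K²)^{⊗n}`, where `U_i` couples the
(1-based) tensor factors `i` and `i+1`. -/
def RU {K : Type*} [CommRing K] (x : Kˣ) (n i : ℕ) :
    Matrix (Fin n → Fin 2) (Fin n → Fin 2) K := fun v w =>
  (∏ k ∈ Finset.univ.filter (fun k : Fin n => (k : ℕ) + 1 ≠ i ∧ (k : ℕ) ≠ i),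
    (if v k = w k then (1 : K) else 0)) *
  xfac x (ext v (i - 1)) (ext v i) * xfac x (ext w (i - 1)) (ext w i)

/-- `R` of a word in the `U_i`: the corresponding product of matrices. -/
def Rword {K : Type*} [CommRing K] (x : Kˣ) (n : ℕ) (L : List ℕ) :
    Matrix (Fin n → Fin 2) (Fin n → Fin 2) K :=
  (L.map (RU x n)).prod

/-- The diagrams expressible as words in `1, 𝒰_1, …, 𝒰_{n-1}` (with no closed
loops arising, so that the value in `𝒯_n` is the diagram itself). -/
inductive GenTL {n : ℕ} : TLDiagram n n → Prop
  | unit : ∀ E, IsId E → GenTL E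
  | step : ∀ (i : ℕ) (U D E : TLDiagram n n), GenTL D → IsU i U →
      IsComposite U D E → zeta U D = 0 → GenTL E

/-!
Induction on the total horizontal displacement `∑ u, |col u - col (E u)|` of a diagram `E`.
If no strand joins two top nodes, the strands are vertical, since they cannot cross, and `E = 1`.
Otherwise an innermost top cup joins adjacent nodes `a` and `b = a + 1`. Walking rightwards from
`b` along the boundary, let `q` be the first node in a column `≥ b` whose partner `E q` lies in a
column `< b`; it exists by parity, and the strands met before `q` stay between `b` and `q`.
Replacing the strands `(a, b)` and `(q, E q)` by `(b, q)` and `(a, E q)` gives a noncrossing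
diagram `D` with `E = 𝒰_b ∘ D` and no closed loop, whose displacement is smaller by `4`.
-/

lemma even_card_of_involution {α : Type*} {s : Finset α} (f : α → α)
    (hmem : ∀ x ∈ s, f x ∈ s) (hinv : ∀ x ∈ s, f (f x) = x) (hne : ∀ x ∈ s, f x ≠ x) :
    Even s.card := by
  rw [← ZMod.natCast_eq_zero_iff_even, Finset.card_eq_sum_ones, Nat.cast_sum, Nat.cast_one]
  exact Finset.sum_involution (fun x _ => f x) (fun _ _ => by decide) (fun x hx _ => hne x hx)
    hmem hinv

def Between (x y z : ℕ) : Prop := min x y < z ∧ z < max x y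

lemma between_comm {x y z : ℕ} : Between x y z ↔ Between y x z := by
  simp only [Between, min_comm, max_comm]

section Nodes

variable {n m : ℕ}

@[simp] lemma nodePos_inl (i : Fin n) : nodePos (Sum.inl i : TLNode n m) = i := rfl

@[simp] lemma nodePos_inr (j : Fin m) : nodePos (Sum.inr j : TLNode n m) = n + m - 1 - j := rfl

lemma nodePos_lt (u : TLNode n m) : nodePos u < n + m := by
  cases u with
  | inl i => simp only [nodePos_inl]; omega
  | inr j => simp only [nodePos_inr]; omega

lemma nodePos_injective : Function.Injective (nodePos : TLNode n m → ℕ) := by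
  rintro (i | j) (i' | j') h <;> simp only [nodePos_inl, nodePos_inr] at h
  · exact congrArg Sum.inl (Fin.ext h)
  · omega
  · omega
  · exact congrArg Sum.inr (Fin.ext (by omega))

lemma exists_inl_of_nodePos_lt {u : TLNode n m} (h : nodePos u < n) : ∃ i, u = Sum.inl i := by
  cases u with
  | inl i => exact ⟨i, rfl⟩
  | inr j => simp only [nodePos_inr] at h; omega

end Nodes

namespace TLDiagram

variable {n m : ℕ} (E : TLDiagram n m)

@[simp] lemma pair_pair (u : TLNode n m) : E.pair (E.pair u) = u := E.involutive u

lemma not_interleave (v w : TLNode n m) :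
    ¬ (nodePos v < nodePos w ∧ nodePos w < nodePos (E.pair v) ∧
      nodePos (E.pair v) < nodePos (E.pair w)) :=
  fun ⟨h1, h2, h3⟩ => E.noncrossing v w h1 h2 h3

lemma between_pair_iff (v w : TLNode n m) :
    Between (nodePos v) (nodePos (E.pair v)) (nodePos w) ↔
      Between (nodePos v) (nodePos (E.pair v)) (nodePos (E.pair w)) := by
  have key : ∀ w, Between (nodePos v) (nodePos (E.pair v)) (nodePos w) →
      Between (nodePos v) (nodePos (E.pair v)) (nodePos (E.pair w)) := by
    intro w hw
    have h1 := E.not_interleave v w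
    have h2 := E.not_interleave (E.pair v) w
    have h3 := E.not_interleave (E.pair w) v
    have h4 := E.not_interleave (E.pair w) (E.pair v)
    have hv : E.pair w ≠ v := fun h => by
      rw [← h, pair_pair] at hw; unfold Between at hw; omega
    have hv' : E.pair w ≠ E.pair v := fun h => by
      rw [E.involutive.injective h] at hw; unfold Between at hw; omega
    have := mt (@nodePos_injective n m _ _) hv
    have := mt (@nodePos_injective n m _ _) hv'
    simp only [pair_pair] at h2 h3 h4
    unfold Between at hw ⊢
    omega
  exact ⟨key w, fun h => by simpa using key (E.pair w) h⟩

def chord (u : TLNode n m) : Sym2 (TLNode n m) := s(u, E.pair u)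

@[simp] lemma chord_pair (u : TLNode n m) : E.chord (E.pair u) = E.chord u := by
  simp [chord, Sym2.eq_swap]

lemma eq_or_eq_pair_of_chord_eq {u v : TLNode n m} (h : E.chord u = E.chord v) :
    v = u ∨ v = E.pair u := by
  rcases Sym2.eq_iff.mp h with ⟨h1, -⟩ | ⟨h1, -⟩
  · exact Or.inl h1.symm
  · exact Or.inr (by rw [h1, pair_pair])

end TLDiagram

lemma noncrossing_of_between {n m : ℕ} {f : TLNode n m → TLNode n m}
    (h : ∀ v w, Between (nodePos v) (nodePos (f v)) (nodePos w) →
      Between (nodePos v) (nodePos (f v)) (nodePos (f w))) (v w : TLNode n m) :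
    nodePos v < nodePos w → nodePos w < nodePos (f v) → nodePos (f v) < nodePos (f w) → False :=
  fun h1 h2 h3 => by have := h v w (by unfold Between; omega); unfold Between at this; omega

section Concatenation

variable {n m l : ℕ} {D : TLDiagram n m} {D' : TLDiagram m l}

lemma linked_inUp (D' : TLDiagram m l) (t : TLNode n m) :
    Linked D D' (inUp t) (inUp (D.pair t)) :=
  Or.inl ⟨t, rfl, rfl⟩

lemma linked_inDown (D : TLDiagram n m) (t : TLNode m l) :
    Linked D D' (inDown t) (inDown (D'.pair t)) :=
  Or.inr ⟨t, rfl, rfl⟩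

instance : Std.Symm (Linked D D') where
  symm := by
    rintro _ _ (⟨t, rfl, rfl⟩ | ⟨t, rfl, rfl⟩)
    · simpa using (linked_inUp D' (D.pair t) : Linked D D' _ _)
    · simpa using (linked_inDown D (D'.pair t) : Linked D D' _ _)

lemma Joined.symm {u v : TriNode n m l} (h : Joined D D' u v) : Joined D D' v u :=
  Std.Symm.symm (r := Relation.ReflTransGen (Linked D D')) _ _ h

lemma Joined.eq_of_linked_imp_eq {α : Sort*} (g : TriNode n m l → α)
    (hg : ∀ u v, Linked D D' u v → g u = g v) {u v : TriNode n m l} (h : Joined D D' u v) :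
    g u = g v := by
  induction h with
  | refl => rfl
  | tail _ hl ih => exact ih.trans (hg _ _ hl)

lemma zeta_eq_zero_of_forall_joined_inOut
    (h : ∀ k : Fin m, ∃ w : TLNode n l, Joined D D' (Sum.inr (Sum.inl k)) (inOut w)) :
    zeta D D' = 0 := by
  have : IsEmpty {c : Quot (Linked D D') //
      ∀ v, Quot.mk (Linked D D') v = c → IsMiddle v} := by
    refine ⟨fun ⟨c, hc⟩ => ?_⟩
    obtain ⟨v, rfl⟩ := Quot.exists_rep c
    rcases v with i | k | k
    · exact hc _ rfl
    · obtain ⟨w, hw⟩ := h k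
      have hq := hw.eq_of_linked_imp_eq (Quot.mk _) fun _ _ => Quot.sound
      rcases w with i | k' <;> exact hc _ hq.symm
    · exact hc _ rfl
  exact Nat.card_of_isEmpty

end Concatenation

section Cup

variable {n : ℕ} (a b : Fin n)

def cupPair : TLNode n n → TLNode n n
  | Sum.inl k => if k = a then Sum.inl b else if k = b then Sum.inl a else Sum.inr k
  | Sum.inr k => if k = a then Sum.inr b else if k = b then Sum.inr a else Sum.inl k

variable {a b}

@[simp] lemma cupPair_inl_left : cupPair a b (Sum.inl a) = Sum.inl b := by simp [cupPair]

@[simp] lemma cupPair_inr_left : cupPair a b (Sum.inr a) = Sum.inr b := by simp [cupPair]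

lemma cupPair_inl_right (hab : a ≠ b) : cupPair a b (Sum.inl b) = Sum.inl a := by
  simp [cupPair, hab.symm]

lemma cupPair_inr_right (hab : a ≠ b) : cupPair a b (Sum.inr b) = Sum.inr a := by
  simp [cupPair, hab.symm]

lemma cupPair_inl_of_ne {k : Fin n} (ha : k ≠ a) (hb : k ≠ b) :
    cupPair a b (Sum.inl k) = Sum.inr k := by
  simp [cupPair, ha, hb]

lemma cupPair_inr_of_ne {k : Fin n} (ha : k ≠ a) (hb : k ≠ b) :
    cupPair a b (Sum.inr k) = Sum.inl k := by
  simp [cupPair, ha, hb]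

variable (hab : (b : ℕ) = a + 1)
include hab

lemma nodePos_cupPair (u : TLNode n n) :
    nodePos u + nodePos (cupPair a b u) = n + n - 1 ∨
    (nodePos u = a ∧ nodePos (cupPair a b u) = b) ∨
    (nodePos u = b ∧ nodePos (cupPair a b u) = a) ∨
    (nodePos u = n + n - 1 - a ∧ nodePos (cupPair a b u) = n + n - 1 - b) ∨
    (nodePos u = n + n - 1 - b ∧ nodePos (cupPair a b u) = n + n - 1 - a) := by
  have hne : a ≠ b := fun h => by rw [h] at hab; omega
  have := b.isLt
  rcases u with k | k <;> have := k.isLt <;> by_cases h1 : k = a <;> by_cases h2 : k = b <;>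
    simp_all [cupPair_inl_right, cupPair_inr_right, cupPair_inl_of_ne, cupPair_inr_of_ne] <;>
    omega

/-- `𝒰_b` in the paper's 1-based numbering: its cup and cap join the 0-based columns `a` and
`b = a + 1`. -/
def uDiagram : TLDiagram n n where
  pair := cupPair a b
  involutive := by
    have hne : a ≠ b := fun h => by rw [h] at hab; omega
    rintro (k | k) <;> by_cases h1 : k = a <;> by_cases h2 : k = b <;>
      simp_all [cupPair_inl_right, cupPair_inr_right, cupPair_inl_of_ne, cupPair_inr_of_ne]
  fixedFree := fun u h => by
    have := a.isLt
    have := nodePos_cupPair hab u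
    rw [h] at this
    omega
  noncrossing := fun v w h1 h2 h3 => by
    have := a.isLt
    have := nodePos_cupPair hab v
    have := nodePos_cupPair hab w
    omega

@[simp] lemma uDiagram_pair : (uDiagram hab).pair = cupPair a b := rfl

lemma isU_uDiagram : IsU b (uDiagram hab) := by
  have hne : a ≠ b := fun h => by rw [h] at hab; omega
  have ha : (⟨b - 1, by omega⟩ : Fin n) = a := Fin.ext (by simp only; omega)
  refine ⟨by omega, b.isLt, ?_, ?_, fun k hk1 hk2 => ?_⟩
  · simp [ha, uDiagram]
  · simp [ha, uDiagram]
  · exact cupPair_inl_of_ne (fun h => hk1 (by rw [h]; omega)) (fun h => hk2 (by rw [h]))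

end Cup

section Reroute

variable {n : ℕ} (E : TLDiagram n n) (a b : Fin n) (q : TLNode n n)

/-- The candidate `D` with `E = 𝒰_b ∘ D`: the cup `(a, b)` and the strand `(q, E q)` of `E`
become the strands `(b, q)` and `(a, E q)`. -/
def reroute (u : TLNode n n) : TLNode n n :=
  if u = Sum.inl b then q
  else if u = q then Sum.inl b
  else if u = Sum.inl a then E.pair q
  else if u = E.pair q then Sum.inl a
  else E.pair u

variable {E a b q}

lemma reroute_distinct (hcup : E.pair (Sum.inl a) = Sum.inl b) (hqa : q ≠ Sum.inl a)
    (hqb : q ≠ Sum.inl b) :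
    (Sum.inl a : TLNode n n) ≠ Sum.inl b ∧ E.pair q ≠ Sum.inl a ∧ E.pair q ≠ Sum.inl b ∧
      E.pair q ≠ q := by
  refine ⟨fun h => E.fixedFree _ (h ▸ hcup), fun h => hqb ?_, fun h => hqa ?_, E.fixedFree q⟩
  · rw [← E.pair_pair q, h, hcup]
  · rw [← E.pair_pair q, h, ← hcup, E.pair_pair]

lemma reroute_inl_right : reroute E a b q (Sum.inl b) = q := by simp [reroute]

lemma reroute_self (hqb : q ≠ Sum.inl b) : reroute E a b q q = Sum.inl b := by
  simp [reroute, hqb]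

lemma reroute_inl_left (hcup : E.pair (Sum.inl a) = Sum.inl b) (hqa : q ≠ Sum.inl a) :
    reroute E a b q (Sum.inl a) = E.pair q := by
  have h1 : (Sum.inl a : TLNode n n) ≠ Sum.inl b := fun h => E.fixedFree _ (h ▸ hcup)
  simp [reroute, h1, hqa.symm]

lemma reroute_pair_self (hcup : E.pair (Sum.inl a) = Sum.inl b) (hqa : q ≠ Sum.inl a)
    (hqb : q ≠ Sum.inl b) : reroute E a b q (E.pair q) = Sum.inl a := by
  obtain ⟨-, h2, h3, h4⟩ := reroute_distinct hcup hqa hqb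
  simp [reroute, h2, h3, h4]

lemma reroute_of_ne {u : TLNode n n} (h1 : u ≠ Sum.inl a) (h2 : u ≠ Sum.inl b) (h3 : u ≠ q)
    (h4 : u ≠ E.pair q) : reroute E a b q u = E.pair u := by
  simp [reroute, h1, h2, h3, h4]

lemma pair_ne_cup (hcup : E.pair (Sum.inl a) = Sum.inl b) {u : TLNode n n}
    (h1 : u ≠ Sum.inl a) (h2 : u ≠ Sum.inl b) : E.pair u ≠ Sum.inl a ∧ E.pair u ≠ Sum.inl b :=
  ⟨fun h => h2 (by rw [← E.pair_pair u, h, hcup]),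
    fun h => h1 (by rw [← E.pair_pair u, h, ← hcup, E.pair_pair])⟩

lemma reroute_cases (hcup : E.pair (Sum.inl a) = Sum.inl b) (hqa : q ≠ Sum.inl a)
    (hqb : q ≠ Sum.inl b) (u : TLNode n n) :
    (u = Sum.inl a ∧ reroute E a b q u = E.pair q) ∨ (u = Sum.inl b ∧ reroute E a b q u = q) ∨
    (u = q ∧ reroute E a b q u = Sum.inl b) ∨ (u = E.pair q ∧ reroute E a b q u = Sum.inl a) ∨
    (u ≠ Sum.inl a ∧ u ≠ Sum.inl b ∧ u ≠ q ∧ u ≠ E.pair q ∧ reroute E a b q u = E.pair u) := by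
  by_cases h1 : u = Sum.inl a
  · exact .inl ⟨h1, h1 ▸ reroute_inl_left hcup hqa⟩
  by_cases h2 : u = Sum.inl b
  · exact .inr <| .inl ⟨h2, h2 ▸ reroute_inl_right⟩
  by_cases h3 : u = q
  · exact .inr <| .inr <| .inl ⟨h3, by rw [h3]; exact reroute_self hqb⟩
  by_cases h4 : u = E.pair q
  · exact .inr <| .inr <| .inr <| .inl ⟨h4, h4 ▸ reroute_pair_self hcup hqa hqb⟩
  exact .inr <| .inr <| .inr <| .inr ⟨h1, h2, h3, h4, reroute_of_ne h1 h2 h3 h4⟩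

lemma reroute_involutive (hcup : E.pair (Sum.inl a) = Sum.inl b) (hqa : q ≠ Sum.inl a)
    (hqb : q ≠ Sum.inl b) : Function.Involutive (reroute E a b q) := by
  intro u
  by_cases h1 : u = Sum.inl a
  · rw [h1, reroute_inl_left hcup hqa, reroute_pair_self hcup hqa hqb]
  by_cases h2 : u = Sum.inl b
  · rw [h2, reroute_inl_right, reroute_self hqb]
  by_cases h3 : u = q
  · rw [h3, reroute_self hqb, reroute_inl_right]
  by_cases h4 : u = E.pair q
  · rw [h4, reroute_pair_self hcup hqa hqb, reroute_inl_left hcup hqa]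
  obtain ⟨e1, e2⟩ := pair_ne_cup hcup h1 h2
  have e3 : E.pair u ≠ q := fun h => h4 (by rw [← h, E.pair_pair])
  have e4 : E.pair u ≠ E.pair q := fun h => h3 (E.involutive.injective h)
  rw [reroute_of_ne h1 h2 h3 h4, reroute_of_ne e1 e2 e3 e4, E.pair_pair]

lemma reroute_ne_self (hcup : E.pair (Sum.inl a) = Sum.inl b) (hqa : q ≠ Sum.inl a)
    (hqb : q ≠ Sum.inl b) (u : TLNode n n) : reroute E a b q u ≠ u := by
  obtain ⟨-, d2, -, -⟩ := reroute_distinct hcup hqa hqb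
  by_cases h1 : u = Sum.inl a
  · rw [h1, reroute_inl_left hcup hqa]; exact d2
  by_cases h2 : u = Sum.inl b
  · rw [h2, reroute_inl_right]; exact hqb
  by_cases h3 : u = q
  · rw [h3, reroute_self hqb]; exact hqb.symm
  by_cases h4 : u = E.pair q
  · rw [h4, reroute_pair_self hcup hqa hqb]; exact d2.symm
  rw [reroute_of_ne h1 h2 h3 h4]
  exact E.fixedFree u

end Reroute

section Composite

variable {n : ℕ} {E D : TLDiagram n n} {a b : Fin n} {q : TLNode n n}

/-- Each node of the concatenation `𝒰_b | D` is labelled by a strand of `E`; links of the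
concatenation preserve labels, so joined outer nodes lie on the same strand of `E`. -/
def rerouteLabel (E : TLDiagram n n) (a b : Fin n) (q : TLNode n n) :
    TriNode n n n → Sym2 (TLNode n n) :=
  Sum.elim (fun k => E.chord (Sum.inl k))
    fun t => if t = Sum.inl a ∨ t = Sum.inl b then E.chord q else E.chord t

lemma rerouteLabel_inDown (t : TLNode n n) :
    rerouteLabel E a b q (inDown t) =
      if t = Sum.inl a ∨ t = Sum.inl b then E.chord q else E.chord t := by
  rcases t with k | k <;> rfl

lemma rerouteLabel_inOut (u : TLNode n n) : rerouteLabel E a b q (inOut u) = E.chord u := by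
  rcases u with k | k
  · rfl
  · simp [rerouteLabel, inOut]

lemma rerouteLabel_linked (hab : (b : ℕ) = a + 1) (hcup : E.pair (Sum.inl a) = Sum.inl b)
    (hqa : q ≠ Sum.inl a) (hqb : q ≠ Sum.inl b) (hD : D.pair = reroute E a b q)
    (u v : TriNode n n n) (h : Linked (uDiagram hab) D u v) :
    rerouteLabel E a b q u = rerouteLabel E a b q v := by
  have hne : a ≠ b := fun h => by rw [h] at hab; omega
  obtain ⟨-, d2, d3, -⟩ := reroute_distinct hcup hqa hqb
  rcases h with ⟨t, rfl, rfl⟩ | ⟨t, rfl, rfl⟩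
  · change rerouteLabel E a b q (inUp t) = rerouteLabel E a b q (inUp (cupPair a b t))
    have hchord : E.chord (Sum.inl a) = E.chord (Sum.inl b) := by
      rw [← hcup, TLDiagram.chord_pair]
    rcases t with k | k <;> by_cases h1 : k = a <;> by_cases h2 : k = b <;>
      simp_all [rerouteLabel, inUp, cupPair_inl_right, cupPair_inr_right, cupPair_inl_of_ne,
        cupPair_inr_of_ne]
  · rw [rerouteLabel_inDown, rerouteLabel_inDown, hD]
    by_cases h1 : t = Sum.inl a
    · simp [h1, reroute_inl_left hcup hqa, d2, d3]
    by_cases h2 : t = Sum.inl b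
    · simp [h2, reroute_inl_right, hqa, hqb]
    by_cases h3 : t = q
    · simp [h3, reroute_self hqb, hqa, hqb]
    by_cases h4 : t = E.pair q
    · simp [h4, reroute_pair_self hcup hqa hqb, d2, d3]
    obtain ⟨e1, e2⟩ := pair_ne_cup hcup h1 h2
    simp [reroute_of_ne h1 h2 h3 h4, h1, h2, e1, e2]

lemma joined_inOut_inDown (hab : (b : ℕ) = a + 1) {u : TLNode n n} (ha : u ≠ Sum.inl a)
    (hb : u ≠ Sum.inl b) : Joined (uDiagram hab) D (inOut u) (inDown u) := by
  rcases u with k | k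
  · have hl := linked_inUp D (D := uDiagram hab) (Sum.inl k)
    rw [uDiagram_pair,
      cupPair_inl_of_ne (fun h => ha (by rw [h])) (fun h => hb (by rw [h]))] at hl
    exact .single hl
  · exact .refl

/-- In `𝒰_b | D`, the strand `(q, E q)` of `E` runs `q → b → a → E q` through the middle row. -/
lemma joined_inDown_pair_self (hab : (b : ℕ) = a + 1) (hcup : E.pair (Sum.inl a) = Sum.inl b)
    (hqa : q ≠ Sum.inl a) (hqb : q ≠ Sum.inl b) (hD : D.pair = reroute E a b q) :
    Joined (uDiagram hab) D (inDown q) (inDown (E.pair q)) := by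
  have hne : a ≠ b := fun h => by rw [h] at hab; omega
  have l1 := linked_inDown (uDiagram hab) (D' := D) q
  have l2 := linked_inUp D (D := uDiagram hab) (Sum.inr b)
  have l3 := linked_inDown (uDiagram hab) (D' := D) (Sum.inl a)
  rw [hD, reroute_self hqb] at l1
  rw [uDiagram_pair, cupPair_inr_right hne] at l2
  rw [hD, reroute_inl_left hcup hqa] at l3
  exact ((Relation.ReflTransGen.single l1).tail l2).tail l3

lemma joined_inOut_pair (hab : (b : ℕ) = a + 1) (hcup : E.pair (Sum.inl a) = Sum.inl b)
    (hqa : q ≠ Sum.inl a) (hqb : q ≠ Sum.inl b) (hD : D.pair = reroute E a b q)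
    (u : TLNode n n) : Joined (uDiagram hab) D (inOut u) (inOut (E.pair u)) := by
  have hne : a ≠ b := fun h => by rw [h] at hab; omega
  by_cases h1 : u = Sum.inl a
  · have hl := linked_inUp D (D := uDiagram hab) (Sum.inl a)
    rw [uDiagram_pair, cupPair_inl_left] at hl
    rw [h1, hcup]
    exact .single hl
  by_cases h2 : u = Sum.inl b
  · have hl := linked_inUp D (D := uDiagram hab) (Sum.inl b)
    rw [uDiagram_pair, cupPair_inl_right hne] at hl
    rw [h2, ← hcup, E.pair_pair, hcup]
    exact .single hl
  obtain ⟨e1, e2⟩ := pair_ne_cup hcup h1 h2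
  have hmid : Joined (uDiagram hab) D (inDown u) (inDown (E.pair u)) := by
    by_cases h3 : u = q
    · rw [h3]; exact joined_inDown_pair_self hab hcup hqa hqb hD
    by_cases h4 : u = E.pair q
    · rw [h4, E.pair_pair]; exact (joined_inDown_pair_self hab hcup hqa hqb hD).symm
    have hl := linked_inDown (uDiagram hab) (D' := D) u
    rw [hD, reroute_of_ne h1 h2 h3 h4] at hl
    exact .single hl
  exact ((joined_inOut_inDown hab h1 h2).trans hmid).trans
    (joined_inOut_inDown hab e1 e2).symm

lemma isComposite_uDiagram_of_pair_eq_reroute (hab : (b : ℕ) = a + 1)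
    (hcup : E.pair (Sum.inl a) = Sum.inl b) (hqa : q ≠ Sum.inl a) (hqb : q ≠ Sum.inl b)
    (hD : D.pair = reroute E a b q) : IsComposite (uDiagram hab) D E := by
  refine fun u v => ⟨fun h => ⟨fun huv => E.fixedFree u (huv ▸ h),
    h ▸ joined_inOut_pair hab hcup hqa hqb hD u⟩, fun ⟨hne, hj⟩ => ?_⟩
  have := hj.eq_of_linked_imp_eq _ (rerouteLabel_linked hab hcup hqa hqb hD)
  rw [rerouteLabel_inOut, rerouteLabel_inOut] at this
  exact ((E.eq_or_eq_pair_of_chord_eq this).resolve_left hne.symm).symm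

lemma zeta_uDiagram_of_pair_eq_reroute (hab : (b : ℕ) = a + 1) (hqa : q ≠ Sum.inl a)
    (hqb : q ≠ Sum.inl b) (hD : D.pair = reroute E a b q) : zeta (uDiagram hab) D = 0 := by
  have hne : a ≠ b := fun h => by rw [h] at hab; omega
  have hb : Joined (uDiagram hab) D (Sum.inr (Sum.inl b)) (inOut q) := by
    have hl := linked_inDown (uDiagram hab) (D' := D) (Sum.inl b)
    rw [hD, reroute_inl_right] at hl
    exact .head hl (joined_inOut_inDown hab hqa hqb).symm
  refine zeta_eq_zero_of_forall_joined_inOut fun k => ?_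
  by_cases h1 : k = a
  · have hl := linked_inUp D (D := uDiagram hab) (Sum.inr a)
    rw [uDiagram_pair, cupPair_inr_left] at hl
    rw [h1]
    exact ⟨q, .head hl hb⟩
  by_cases h2 : k = b
  · rw [h2]
    exact ⟨q, hb⟩
  have hl := linked_inUp D (D := uDiagram hab) (Sum.inr k)
  rw [uDiagram_pair, cupPair_inr_of_ne h1 h2] at hl
  exact ⟨Sum.inl k, .single hl⟩

end Composite

section Exit

variable {n : ℕ}

def coord : TLNode n n → ℕ
  | Sum.inl i => i
  | Sum.inr j => j

@[simp] lemma coord_inl (i : Fin n) : coord (Sum.inl i : TLNode n n) = i := rfl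

lemma coord_eq_min (u : TLNode n n) : coord u = min (nodePos u) (n + n - 1 - nodePos u) := by
  rcases u with i | j <;> simp only [coord, nodePos_inl, nodePos_inr] <;> omega

/-- `q` lies right of the top cup `(a, b)`, in a column `≥ b`, and its strand is the first one,
scanning rightwards from `b` along the boundary, that leaves the columns `≥ b`. -/
structure IsCupExit (E : TLDiagram n n) (a b : Fin n) (q : TLNode n n) : Prop where
  succ_eq : (b : ℕ) = a + 1
  pair_inl : E.pair (Sum.inl a) = Sum.inl b
  lt_nodePos : (b : ℕ) < nodePos q
  le_coord : (b : ℕ) ≤ coord q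
  coord_pair_lt : coord (E.pair q) < b
  between_closed : ∀ w, (b : ℕ) < nodePos w → nodePos w < nodePos q →
    (b : ℕ) < nodePos (E.pair w) ∧ nodePos (E.pair w) < nodePos q

variable {E : TLDiagram n n} {a b : Fin n} {q : TLNode n n}

namespace IsCupExit

variable (h : IsCupExit E a b q)
include h

lemma ne_inl_left : q ≠ Sum.inl a := fun hq => by
  have := h.lt_nodePos; rw [hq, nodePos_inl] at this; have := h.succ_eq; omega

lemma ne_inl_right : q ≠ Sum.inl b := fun hq => by
  have := h.lt_nodePos; rw [hq, nodePos_inl] at this; omega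

lemma nodePos_pair : nodePos (E.pair q) < a ∨ nodePos q < nodePos (E.pair q) := by
  have := h.succ_eq
  have := h.le_coord
  have := h.coord_pair_lt
  have := coord_eq_min q
  have := coord_eq_min (E.pair q)
  have := nodePos_lt (E.pair q)
  have : E.pair q ≠ Sum.inl a :=
    (reroute_distinct h.pair_inl h.ne_inl_left h.ne_inl_right).2.1
  have := mt (@nodePos_injective n n _ _) this
  simp only [nodePos_inl] at this
  omega

lemma nodePos_ne_of_ne {x : TLNode n n} (h1 : x ≠ Sum.inl a) (h2 : x ≠ Sum.inl b)
    (h3 : x ≠ q) (h4 : x ≠ E.pair q) :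
    nodePos x ≠ a ∧ nodePos x ≠ b ∧ nodePos x ≠ nodePos q ∧ nodePos x ≠ nodePos (E.pair q) ∧
      nodePos (E.pair x) ≠ a ∧ nodePos (E.pair x) ≠ b ∧ nodePos (E.pair x) ≠ nodePos q ∧
      nodePos (E.pair x) ≠ nodePos (E.pair q) := by
  obtain ⟨e1, e2⟩ := pair_ne_cup h.pair_inl h1 h2
  have e3 : E.pair x ≠ q := fun hx => h4 (by rw [← hx, E.pair_pair])
  have e4 : E.pair x ≠ E.pair q := fun hx => h3 (E.involutive.injective hx)
  have hpos := fun (y z : TLNode n n) (hyz : y ≠ z) => mt (@nodePos_injective n n y z) hyz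
  exact ⟨hpos _ _ h1, hpos _ _ h2, hpos _ _ h3, hpos _ _ h4, hpos _ _ e1, hpos _ _ e2,
    hpos _ _ e3, hpos _ _ e4⟩

/-- A strand of `E` other than the cup and the exit strand either encloses all four of their
endpoints or none of them. -/
lemma between_iff_of_ne {x : TLNode n n} (h1 : x ≠ Sum.inl a) (h2 : x ≠ Sum.inl b)
    (h3 : x ≠ q) (h4 : x ≠ E.pair q) :
    (Between (nodePos x) (nodePos (E.pair x)) a ↔ Between (nodePos x) (nodePos (E.pair x)) b) ∧
    (Between (nodePos x) (nodePos (E.pair x)) b ↔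
      Between (nodePos x) (nodePos (E.pair x)) (nodePos q)) ∧
    (Between (nodePos x) (nodePos (E.pair x)) (nodePos q) ↔
      Between (nodePos x) (nodePos (E.pair x)) (nodePos (E.pair q))) := by
  have ha := E.between_pair_iff x (Sum.inl a)
  have hq := E.between_pair_iff x q
  rw [h.pair_inl, nodePos_inl, nodePos_inl] at ha
  refine ⟨ha, ?_, hq⟩
  have hx := h.between_closed x
  have hx' := h.between_closed (E.pair x)
  rw [E.pair_pair] at hx'
  have := h.nodePos_ne_of_ne h1 h2 h3 h4
  have := h.succ_eq
  have := h.lt_nodePos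
  unfold Between
  omega

lemma between_reroute_of_ne {v : TLNode n n} (h1 : v ≠ Sum.inl a) (h2 : v ≠ Sum.inl b)
    (h3 : v ≠ q) (h4 : v ≠ E.pair q) (w : TLNode n n)
    (hw : Between (nodePos v) (nodePos (E.pair v)) (nodePos w)) :
    Between (nodePos v) (nodePos (E.pair v)) (nodePos (reroute E a b q w)) := by
  obtain ⟨s1, s2, s3⟩ := h.between_iff_of_ne h1 h2 h3 h4
  rcases reroute_cases h.pair_inl h.ne_inl_left h.ne_inl_right w with
    ⟨rfl, hR⟩ | ⟨rfl, hR⟩ | ⟨rfl, hR⟩ | ⟨rfl, hR⟩ | ⟨-, -, -, -, hR⟩ <;> rw [hR]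
  · exact s3.mp (s2.mp (s1.mp hw))
  · exact s2.mp hw
  · exact s2.mpr hw
  · exact s1.mpr (s2.mpr (s3.mpr hw))
  · exact (E.between_pair_iff v w).mp hw

lemma between_reroute_inl_right (w : TLNode n n) (hw : Between b (nodePos q) (nodePos w)) :
    Between b (nodePos q) (nodePos (reroute E a b q w)) := by
  have hp := h.nodePos_pair
  have := h.succ_eq
  have := h.lt_nodePos
  unfold Between at hw ⊢
  rcases reroute_cases h.pair_inl h.ne_inl_left h.ne_inl_right w with
    ⟨rfl, hR⟩ | ⟨rfl, hR⟩ | ⟨rfl, hR⟩ | ⟨rfl, hR⟩ | ⟨-, -, -, -, hR⟩ <;>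
    rw [hR] <;> (try simp only [nodePos_inl] at hw ⊢)
  · omega
  · omega
  · omega
  · omega
  · have := h.between_closed w
    omega

lemma between_reroute_inl_left (w : TLNode n n)
    (hw : Between a (nodePos (E.pair q)) (nodePos w)) :
    Between a (nodePos (E.pair q)) (nodePos (reroute E a b q w)) := by
  have hp := h.nodePos_pair
  have := h.succ_eq
  have := h.lt_nodePos
  rcases reroute_cases h.pair_inl h.ne_inl_left h.ne_inl_right w with
    ⟨rfl, hR⟩ | ⟨rfl, hR⟩ | ⟨rfl, hR⟩ | ⟨rfl, hR⟩ | ⟨h1, h2, h3, h4, hR⟩ <;>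
    rw [hR] <;> unfold Between at hw ⊢ <;> (try simp only [nodePos_inl] at hw ⊢)
  · omega
  · omega
  · omega
  · omega
  · have hs := h.between_iff_of_ne h1 h2 h3 h4
    have := h.nodePos_ne_of_ne h1 h2 h3 h4
    have := h.between_closed w
    unfold Between at hs
    omega

lemma between_reroute (v w : TLNode n n)
    (hw : Between (nodePos v) (nodePos (reroute E a b q v)) (nodePos w)) :
    Between (nodePos v) (nodePos (reroute E a b q v)) (nodePos (reroute E a b q w)) := by
  rcases reroute_cases h.pair_inl h.ne_inl_left h.ne_inl_right v with
    ⟨rfl, hR⟩ | ⟨rfl, hR⟩ | ⟨rfl, hR⟩ | ⟨rfl, hR⟩ | ⟨h1, h2, h3, h4, hR⟩ <;> rw [hR] at hw ⊢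
  · exact h.between_reroute_inl_left w hw
  · exact h.between_reroute_inl_right w hw
  · exact between_comm.mpr (h.between_reroute_inl_right w (between_comm.mp hw))
  · exact between_comm.mpr (h.between_reroute_inl_left w (between_comm.mp hw))
  · exact h.between_reroute_of_ne h1 h2 h3 h4 w hw

end IsCupExit

end Exit

section Displacement

variable {n : ℕ} {E : TLDiagram n n} {a b : Fin n} {q : TLNode n n}

def rerouteDiagram (h : IsCupExit E a b q) : TLDiagram n n where
  pair := reroute E a b q
  involutive := reroute_involutive h.pair_inl h.ne_inl_left h.ne_inl_right
  fixedFree := reroute_ne_self h.pair_inl h.ne_inl_left h.ne_inl_right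
  noncrossing := noncrossing_of_between h.between_reroute

@[simp] lemma rerouteDiagram_pair (h : IsCupExit E a b q) :
    (rerouteDiagram h).pair = reroute E a b q := rfl

def displacement (E : TLDiagram n n) : ℕ := ∑ u, Nat.dist (coord u) (coord (E.pair u))

lemma displacement_rerouteDiagram (h : IsCupExit E a b q) :
    displacement (rerouteDiagram h) + 4 = displacement E := by
  classical
  have hcup := h.pair_inl
  have hqa := h.ne_inl_left
  have hqb := h.ne_inl_right
  obtain ⟨d1, d2, d3, d4⟩ := reroute_distinct hcup hqa hqb
  set s : Finset (TLNode n n) := {Sum.inl a, Sum.inl b, q, E.pair q}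
  have hs (f : TLNode n n → ℕ) :
      ∑ u ∈ s, f u = f (Sum.inl a) + f (Sum.inl b) + f q + f (E.pair q) := by
    rw [Finset.sum_insert (by simp [d1, hqa.symm, d2.symm]),
      Finset.sum_insert (by simp [hqb.symm, d3.symm]), Finset.sum_pair d4.symm]
    ring
  have hcompl : ∀ u ∈ sᶜ, Nat.dist (coord u) (coord (reroute E a b q u)) =
      Nat.dist (coord u) (coord (E.pair u)) := by
    intro u hu
    simp only [s, Finset.mem_compl, Finset.mem_insert, Finset.mem_singleton, not_or] at hu
    rw [reroute_of_ne hu.1 hu.2.1 hu.2.2.1 hu.2.2.2]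
  unfold displacement
  rw [rerouteDiagram_pair, ← Finset.sum_add_sum_compl s,
    ← Finset.sum_add_sum_compl s (fun u => Nat.dist _ _), Finset.sum_congr rfl hcompl, hs, hs,
    reroute_inl_left hcup hqa, reroute_inl_right, reroute_self hqb,
    reroute_pair_self hcup hqa hqb, E.pair_pair, hcup, ← hcup, E.pair_pair, hcup]
  have := h.le_coord
  have := h.coord_pair_lt
  have := h.succ_eq
  simp only [coord_inl, Nat.dist]
  omega

end Displacement

section Existence

variable {n : ℕ}

/-- An innermost top cup has adjacent ends. -/
lemma exists_succ_cup_of_lt (E : TLDiagram n n) {a b : Fin n} (hab : a < b)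
    (h : E.pair (Sum.inl a) = Sum.inl b) :
    ∃ c d : Fin n, (d : ℕ) = c + 1 ∧ E.pair (Sum.inl c) = Sum.inl d := by
  induction hd : (b : ℕ) - a using Nat.strong_induction_on generalizing a b with
  | _ d ih =>
  by_cases hsucc : (b : ℕ) = a + 1
  · exact ⟨a, b, hsucc, h⟩
  have hab' : (a : ℕ) < b := hab
  let c : Fin n := ⟨a + 1, by omega⟩
  have hc : (c : ℕ) = a + 1 := rfl
  have hin := (E.between_pair_iff (Sum.inl a) (Sum.inl c)).mp
  rw [h] at hin
  replace hin := hin (by simp only [Between, nodePos_inl]; omega)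
  simp only [Between, nodePos_inl] at hin
  obtain ⟨e, he⟩ := exists_inl_of_nodePos_lt (u := E.pair (Sum.inl c)) (by omega)
  rw [he, nodePos_inl] at hin
  have hce : (c : ℕ) ≠ e := fun hce => E.fixedFree _ (by rw [he, Fin.ext hce])
  exact ih (e - c) (by omega) (Fin.lt_def.mpr (by omega)) he rfl

lemma exists_succ_cup (E : TLDiagram n n) (h : ∃ a b : Fin n, E.pair (Sum.inl a) = Sum.inl b) :
    ∃ a b : Fin n, (b : ℕ) = a + 1 ∧ E.pair (Sum.inl a) = Sum.inl b := by
  obtain ⟨a, b, hab⟩ := h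
  rcases lt_or_gt_of_ne (fun he : a = b => E.fixedFree _ (by rw [hab, he])) with h | h
  · exact exists_succ_cup_of_lt E h hab
  · exact exists_succ_cup_of_lt E h (by rw [← hab, E.pair_pair])

lemma even_card_filter_le_coord (b : ℕ) :
    Even (Finset.univ.filter (fun u : TLNode n n => b ≤ coord u)).card := by
  rw [Finset.card_filter, Fintype.sum_sum_type]
  exact ⟨_, rfl⟩

/-- Columns `≥ b` hold an even number of nodes, and the node `b` of the cup is paired outside
them, so some other node of these columns is paired outside them too. -/
lemma exists_coord_pair_lt (E : TLDiagram n n) {a b : Fin n} (hab : (b : ℕ) = a + 1)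
    (hcup : E.pair (Sum.inl a) = Sum.inl b) :
    ∃ w, (b : ℕ) ≤ coord w ∧ w ≠ Sum.inl b ∧ coord (E.pair w) < b := by
  classical
  set W := Finset.univ.filter (fun u : TLNode n n => (b : ℕ) ≤ coord u)
  have hbW : Sum.inl b ∈ W := by simp [W]
  have hodd : ¬ Even (W.erase (Sum.inl b)).card := by
    obtain ⟨k, hk⟩ : Even W.card := even_card_filter_le_coord _
    have := Finset.card_pos.mpr ⟨_, hbW⟩
    rw [Finset.card_erase_of_mem hbW]
    rintro ⟨j, hj⟩
    omega
  by_contra! hcon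
  refine hodd (even_card_of_involution E.pair (fun w hw => ?_) (fun w _ => E.pair_pair w)
    (fun w _ => E.fixedFree w))
  obtain ⟨hwb, hwW⟩ := Finset.mem_erase.mp hw
  have hw' : (b : ℕ) ≤ coord w := (Finset.mem_filter.mp hwW).2
  refine Finset.mem_erase.mpr
    ⟨fun he => ?_, Finset.mem_filter.mpr ⟨Finset.mem_univ _, hcon w hw' hwb⟩⟩
  rw [← hcup, E.involutive.injective.eq_iff] at he
  rw [he, coord_inl] at hw'
  omega

lemma exists_isCupExit (E : TLDiagram n n) {a b : Fin n} (hab : (b : ℕ) = a + 1)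
    (hcup : E.pair (Sum.inl a) = Sum.inl b) : ∃ q, IsCupExit E a b q := by
  classical
  set S := Finset.univ.filter
    (fun w : TLNode n n => (b : ℕ) ≤ coord w ∧ w ≠ Sum.inl b ∧ coord (E.pair w) < b)
  obtain ⟨w, hw⟩ := exists_coord_pair_lt E hab hcup
  obtain ⟨q, hqS, hqmin⟩ := S.exists_min_image nodePos ⟨w, by simpa [S] using hw⟩
  obtain ⟨hq1, hq2, hq3⟩ := (Finset.mem_filter.mp hqS).2
  have hposb : nodePos q ≠ b := fun he => hq2 (nodePos_injective (by rw [he, nodePos_inl]))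
  have := coord_eq_min q
  have := nodePos_lt q
  refine ⟨q, hab, hcup, by omega, hq1, hq3, fun w hw1 hw2 => ?_⟩
  have := coord_eq_min w
  have := coord_eq_min (E.pair w)
  have := nodePos_lt (E.pair w)
  have hwS : w ∉ S := fun hwS => (hqmin w hwS).not_gt hw2
  have hwb : w ≠ Sum.inl b := fun he => by rw [he, nodePos_inl] at hw1; omega
  have hEw : (b : ℕ) ≤ coord (E.pair w) := by
    by_contra! hlt
    exact hwS (Finset.mem_filter.mpr ⟨Finset.mem_univ _, by omega, hwb, hlt⟩)
  have hEwb : nodePos (E.pair w) ≠ b := fun he => by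
    have : E.pair w = Sum.inl b := nodePos_injective (by rw [he, nodePos_inl])
    rw [← hcup, E.involutive.injective.eq_iff] at this
    rw [this, nodePos_inl] at hw1
    omega
  have hEwq : E.pair w ≠ q := fun he => by
    rw [← he, E.pair_pair] at hq3
    omega
  have hEwq' := mt (@nodePos_injective n n _ _) hEwq
  -- a strand from `(b, q)` reaching beyond `q` would enclose `q`, hence `E q`, which lies
  -- outside the columns `≥ b`
  have key := E.between_pair_iff w q
  have := coord_eq_min (E.pair q)
  have := nodePos_lt (E.pair q)
  unfold Between at key
  omega

lemma isId_of_forall_pair_inl_ne (E : TLDiagram n n)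
    (h : ∀ a b : Fin n, E.pair (Sum.inl a) ≠ Sum.inl b) : IsId E := by
  have hσ : ∀ k : Fin n, ∃ j : Fin n, E.pair (Sum.inl k) = Sum.inr j := fun k => by
    rcases hk : E.pair (Sum.inl k) with j | j
    · exact absurd hk (h k j)
    · exact ⟨j, rfl⟩
  choose σ hσ using hσ
  have hmono : StrictMono σ := by
    intro k l hkl
    have hne : σ k ≠ σ l := fun he => hkl.ne (Sum.inl_injective
      (E.involutive.injective (by rw [hσ, hσ, he])))
    by_contra hle
    have hlt : (σ l : ℕ) < σ k := lt_of_le_of_ne (not_lt.mp hle) (Fin.val_injective.ne hne.symm)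
    have := E.not_interleave (Sum.inl k) (Sum.inl l)
    rw [hσ, hσ] at this
    simp only [nodePos_inl, nodePos_inr] at this
    have := l.isLt
    have : (k : ℕ) < l := hkl
    omega
  intro k
  rw [hσ, hmono.eq_id]
  rfl

end Existence

/-- `𝒯_n` is generated as a unital `K`-algebra by
`𝒰_1, …, 𝒰_{n-1}`: every diagram in `D(n,n)` is a word in `1, 𝒰_1, …, 𝒰_{n-1}`. -/
theorem statement3 {n : ℕ} (E : TLDiagram n n) : GenTL E := by
  induction hE : displacement E using Nat.strong_induction_on generalizing E with
  | _ N ih =>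
  by_cases hcup : ∃ a b : Fin n, E.pair (Sum.inl a) = Sum.inl b
  · obtain ⟨a, b, hab, hcup⟩ := exists_succ_cup E hcup
    obtain ⟨q, hq⟩ := exists_isCupExit E hab hcup
    have hD := ih _ (by have := displacement_rerouteDiagram hq; omega) (rerouteDiagram hq) rfl
    exact .step b (uDiagram hab) (rerouteDiagram hq) E hD (isU_uDiagram hab)
      (isComposite_uDiagram_of_pair_eq_reroute hab hcup hq.ne_inl_left hq.ne_inl_right rfl)
      (zeta_uDiagram_of_pair_eq_reroute hab hq.ne_inl_left hq.ne_inl_right rfl)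
  · exact .unit E (isId_of_forall_pair_inl_ne E fun a b h => hcup ⟨a, b, h⟩)

end TLBlob
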